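/- arXiv:2301.05514 — 2 statements merged into one kernel-verified Lean document; each statement's English description precedes it below -/
import Mathlib

section
/- For any two (not necessarily distinct) vertices u_1 and u_2 of D_5, there exist at least 16 branch vertices v of D_5 with dist_{D_5}(u_1, v) ≥ 4 and dist_{D_5}(u_2, v) ≥ 4; in particular, there exists a branch vertex at distance at least 4 from both u_1 and u_2. -/
/-!
The dodecahedron graph `Dod` is realized as the generalized Petersen graph GP(10,2)
(the 3-regular graph on 20 vertices and 30 edges that is the 1-skeleton of the regular
dodecahedron).  Its 30 edges are indexed by `DE = Fin 3 × ZMod 10`: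
* `(0, i)` : outer-cycle edge `(0,i) — (0,i+1)`,
* `(1, i)` : spoke `(0,i) — (1,i)`,
* `(2, i)` : inner edge `(1,i) — (1,i+2)`.
`D5` is the 5-fold subdivision of `Dod`: every edge is replaced by a path with exactly
5 internal new vertices. The branch vertices (degree-3 vertices) of `D5` are exactly
the vertices of the form `Sum.inl v`, corresponding bijectively to the vertices of `Dod`.
-/

/-- Vertices of the dodecahedron graph. -/
abbrev DV : Type := Fin 2 × ZMod 10

/-- (Indexing type for the) edges of the dodecahedron graph. -/
abbrev DE : Type := Fin 3 × ZMod 10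

/-- First endpoint of an edge of the dodecahedron graph. -/
def ep0 (e : DE) : DV :=
  if e.1 = 0 then (0, e.2) else if e.1 = 1 then (0, e.2) else (1, e.2)

/-- Second endpoint of an edge of the dodecahedron graph. -/
def ep1 (e : DE) : DV :=
  if e.1 = 0 then (0, e.2 + 1) else if e.1 = 1 then (1, e.2) else (1, e.2 + 2)

/-- The dodecahedron graph `D` (as the generalized Petersen graph GP(10,2)). -/
def Dod : SimpleGraph DV :=
  SimpleGraph.fromRel (fun u v => ∃ e : DE, u = ep0 e ∧ v = ep1 e)

/-- Vertices of the 5-fold subdivision `D_5` of the dodecahedron graph: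
original (branch) vertices, plus 5 internal vertices on each edge. -/
abbrev DV5 : Type := DV ⊕ (DE × Fin 5)

/-- The edges of `D_5`: each edge `e` of the dodecahedron becomes the path
`ep0 e — (e,0) — (e,1) — (e,2) — (e,3) — (e,4) — ep1 e` of length 6. -/
def D5Rel : DV5 → DV5 → Prop
  | Sum.inl u, Sum.inr (e, i) => (u = ep0 e ∧ i = (0 : Fin 5)) ∨ (u = ep1 e ∧ i = (4 : Fin 5))
  | Sum.inr (e, i), Sum.inr (e', j) => e = e' ∧ (j : ℕ) = (i : ℕ) + 1
  | _, _ => False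

/-- The 5-fold subdivision `D_5` of the dodecahedron graph. -/
def D5 : SimpleGraph DV5 := SimpleGraph.fromRel D5Rel

/-!
Branch vertices of `D5` are pairwise at distance at least 6, and from an internal vertex of the
subdivided edge `e` every other branch vertex is reached through an endpoint of `e`. Hence at most
two branch vertices lie within distance 3 of any vertex, which is checked by listing the radius-3
balls. Discarding those of `u₁` and `u₂` leaves at least `20 - 4 = 16` branch vertices; their
distances to `u₁` and `u₂` are genuine (not the junk value `0`) because `D5` is connected.
-/

open SimpleGraph

namespace SimpleGraph

variable {V : Type*} (nbrs : V → List V)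

def listBall (u : V) : ℕ → List V
  | 0 => [u]
  | n + 1 => (listBall u n).flatMap nbrs ++ listBall u n

variable {G : SimpleGraph V} {nbrs}

theorem mem_listBall_of_walk (hG : ∀ ⦃u w⦄, G.Adj u w → w ∈ nbrs u) {u : V} :
    ∀ {n : ℕ} {v : V} (p : G.Walk v u), p.length ≤ n → v ∈ listBall nbrs u n
  | 0, _, .nil, _ => List.mem_singleton_self _
  | n + 1, _, .nil, _ => List.mem_append_right _ (mem_listBall_of_walk hG .nil n.zero_le)
  | _ + 1, _, .cons h p, hp => List.mem_append_left _ <|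
      List.mem_flatMap.2 ⟨_, mem_listBall_of_walk hG p (by simpa using hp), hG h.symm⟩

theorem lt_dist_of_notMem_listBall (hG : ∀ ⦃u w⦄, G.Adj u w → w ∈ nbrs u) {u v : V} {n : ℕ}
    (huv : G.Reachable u v) (hv : v ∉ listBall nbrs u n) : n < G.dist u v := by
  by_contra! h
  obtain ⟨p, hp⟩ := huv.symm.exists_walk_length_eq_dist
  exact hv (mem_listBall_of_walk hG p (by rw [hp, dist_comm]; exact h))

end SimpleGraph

lemma D5_adj_ep0_inr_zero (e : DE) : D5.Adj (Sum.inl (ep0 e)) (Sum.inr (e, 0)) :=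
  (fromRel_adj _ _ _).2 ⟨Sum.inl_ne_inr, .inl (.inl ⟨rfl, rfl⟩)⟩

lemma D5_adj_inr_four_ep1 (e : DE) : D5.Adj (Sum.inr (e, 4)) (Sum.inl (ep1 e)) :=
  (fromRel_adj _ _ _).2 ⟨Sum.inr_ne_inl, .inr (.inr ⟨rfl, rfl⟩)⟩

lemma D5_adj_inr_succ (e : DE) (i : Fin 4) :
    D5.Adj (Sum.inr (e, i.castSucc)) (Sum.inr (e, i.succ)) :=
  (fromRel_adj _ _ _).2 ⟨by simp [Fin.ext_iff], .inl ⟨rfl, by simp⟩⟩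

lemma D5_reachable_inr (e : DE) (i : Fin 5) : D5.Reachable (Sum.inl (ep0 e)) (Sum.inr (e, i)) := by
  induction i using Fin.induction with
  | zero => exact (D5_adj_ep0_inr_zero e).reachable
  | succ i ih => exact ih.trans (D5_adj_inr_succ e i).reachable

lemma D5_reachable_ep0_ep1 (e : DE) : D5.Reachable (Sum.inl (ep0 e)) (Sum.inl (ep1 e)) :=
  (D5_reachable_inr e 4).trans (D5_adj_inr_four_ep1 e).reachable

lemma D5_reachable_outer (n : ℕ) : D5.Reachable (Sum.inl (0, 0)) (Sum.inl (0, (n : ZMod 10))) := by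
  induction n with
  | zero => exact .rfl
  | succ n ih => simpa [ep0, ep1] using ih.trans (D5_reachable_ep0_ep1 (0, n))

lemma D5_connected : D5.Connected := by
  have branch (v : DV) : D5.Reachable (Sum.inl (0, 0)) (Sum.inl v) := by
    obtain ⟨k, i⟩ := v
    have outer := D5_reachable_outer i.val
    rw [ZMod.natCast_zmod_val] at outer
    fin_cases k
    · exact outer
    · simpa [ep0, ep1] using outer.trans (D5_reachable_ep0_ep1 (1, i))
  refine (connected_iff_exists_forall_reachable _).2 ⟨Sum.inl (0, 0), ?_⟩
  rintro (v | ⟨e, i⟩)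
  · exact branch v
  · exact (branch (ep0 e)).trans (D5_reachable_inr e i)

/-- An explicit neighbour list, so that the kernel can evaluate `nearBranch` by `decide`. -/
def D5Nbrs : DV5 → List DV5
  | Sum.inl v =>
      if v.1 = 0 then
        [Sum.inr ((0, v.2), 0), Sum.inr ((1, v.2), 0), Sum.inr ((0, v.2 - 1), 4)]
      else
        [Sum.inr ((1, v.2), 4), Sum.inr ((2, v.2), 0), Sum.inr ((2, v.2 - 2), 4)]
  | Sum.inr (e, i) =>
      if i = 0 then [Sum.inl (ep0 e), Sum.inr (e, 1)]
      else if i = 1 then [Sum.inr (e, 0), Sum.inr (e, 2)]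
      else if i = 2 then [Sum.inr (e, 1), Sum.inr (e, 3)]
      else if i = 3 then [Sum.inr (e, 2), Sum.inr (e, 4)]
      else [Sum.inr (e, 3), Sum.inl (ep1 e)]

lemma mem_D5Nbrs_of_D5Rel : ∀ u w : DV5, D5Rel u w → w ∈ D5Nbrs u ∧ u ∈ D5Nbrs w := by
  rintro (v | ⟨e, i⟩) (v' | ⟨⟨k, t⟩, j⟩) h
  · exact h.elim
  · rcases h with ⟨rfl, rfl⟩ | ⟨rfl, rfl⟩
    · fin_cases k <;> simp [D5Nbrs, ep0]
    · fin_cases k <;> simp [D5Nbrs, ep1]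
  · exact h.elim
  · obtain ⟨⟨rfl, rfl⟩, h⟩ := h
    fin_cases i <;> fin_cases j <;> simp_all [D5Nbrs]

lemma mem_D5Nbrs_of_adj {u w : DV5} (h : D5.Adj u w) : w ∈ D5Nbrs u := by
  rcases ((fromRel_adj _ _ _).1 h).2 with h | h
  · exact (mem_D5Nbrs_of_D5Rel u w h).1
  · exact (mem_D5Nbrs_of_D5Rel w u h).2

def nearBranch (u : DV5) : Finset DV :=
  ((listBall D5Nbrs u 3).filterMap Sum.getLeft?).toFinset

lemma lt_dist_of_notMem_nearBranch {u : DV5} {v : DV} (hv : v ∉ nearBranch u) :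
    3 < D5.dist u (Sum.inl v) :=
  lt_dist_of_notMem_listBall (fun _ _ => mem_D5Nbrs_of_adj) (D5_connected.preconnected _ _)
    (by simpa [nearBranch] using hv)

set_option maxRecDepth 4000 in
lemma card_nearBranch_le_two : ∀ u : DV5, (nearBranch u).card ≤ 2 := by decide

lemma sixteen_le_card_compl_nearBranch_union (u₁ u₂ : DV5) :
    16 ≤ (nearBranch u₁ ∪ nearBranch u₂)ᶜ.card := by
  have := (Finset.card_union_le _ _).trans <|
    add_le_add (card_nearBranch_le_two u₁) (card_nearBranch_le_two u₂)
  rw [Finset.card_compl, show Fintype.card DV = 20 by rfl]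
  omega

/-- For any two (not necessarily distinct) vertices `u₁` and `u₂` of
`D_5`, there exist at least 16 branch vertices `v` with `dist_{D_5}(u₁, v) ≥ 4` and
`dist_{D_5}(u₂, v) ≥ 4`; in particular, there exists a branch vertex at distance at
least 4 from both `u₁` and `u₂`. -/
theorem many_branch_vertices_far_from_two_vertices (u₁ u₂ : DV5) :
    16 ≤ {v : DV | 4 ≤ D5.dist u₁ (Sum.inl v) ∧ 4 ≤ D5.dist u₂ (Sum.inl v)}.ncard ∧
    ∃ v : DV, 4 ≤ D5.dist u₁ (Sum.inl v) ∧ 4 ≤ D5.dist u₂ (Sum.inl v) := by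
  set far := {v : DV | 4 ≤ D5.dist u₁ (Sum.inl v) ∧ 4 ≤ D5.dist u₂ (Sum.inl v)}
  have hsub : ↑(nearBranch u₁ ∪ nearBranch u₂)ᶜ ⊆ far := by
    intro v hv
    simp only [Finset.coe_compl, Finset.coe_union, Set.mem_compl_iff, Set.mem_union,
      Finset.mem_coe, not_or] at hv
    exact ⟨lt_dist_of_notMem_nearBranch hv.1, lt_dist_of_notMem_nearBranch hv.2⟩
  have h16 : 16 ≤ far.ncard := calc
    16 ≤ (nearBranch u₁ ∪ nearBranch u₂)ᶜ.card := sixteen_le_card_compl_nearBranch_union u₁ u₂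
    _ = (↑(nearBranch u₁ ∪ nearBranch u₂)ᶜ : Set DV).ncard := (Set.ncard_coe_finset _).symm
    _ ≤ far.ncard := Set.ncard_le_ncard hsub
  exact ⟨h16, Set.nonempty_of_ncard_ne_zero (s := far) (by omega)⟩
end

section
/- Let v and w be branch vertices of D_5 with dist_{D_5}(v, w) = 6. Then for every neighbor s of v in D_5 there exists a neighbor t of w in D_5 with dist_{D_5}(s, t) = 4 or dist_{D_5}(s, t) = 6. -/
/-!
`D5` is bipartite, with the branch vertices on one side. Hence `dist(w, s)` is odd, and by the
triangle inequality it lies between `5` and `7`, so it is `5` or `7`. The neighbour `t` of `w` on a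
shortest `w`–`s` path then satisfies `dist(s, t) = dist(w, s) - 1 ∈ {4, 6}`.
-/

namespace SimpleGraph

variable {V : Type*} {G : SimpleGraph V} {u v w s : V}

theorem Coloring.even_dist_iff_congr (c : G.Coloring Bool) (h : G.Reachable u v) :
    Even (G.dist u v) ↔ (c u ↔ c v) := by
  obtain ⟨p, hp⟩ := h.exists_walk_length_eq_dist
  rw [← hp, c.even_length_iff_congr p]

theorem Reachable.exists_adj_dist_add_one_eq (h : G.Reachable u v) (hne : u ≠ v) :
    ∃ t, G.Adj u t ∧ G.dist t v + 1 = G.dist u v := by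
  obtain ⟨p, hp⟩ := h.exists_walk_length_eq_dist
  have hnil : ¬ p.Nil := fun hnil => hne hnil.eq
  have hadj : G.Adj u p.snd := p.adj_snd hnil
  refine ⟨p.snd, hadj, le_antisymm ?_ ?_⟩
  · calc G.dist p.snd v + 1 ≤ p.tail.length + 1 := Nat.add_le_add_right (dist_le _) 1
      _ = G.dist u v := by rw [p.length_tail_add_one hnil, hp]
  · calc G.dist u v ≤ G.dist u p.snd + G.dist p.snd v := hadj.reachable.dist_triangle_left v
      _ = G.dist p.snd v + 1 := by rw [dist_eq_one_iff_adj.mpr hadj, add_comm]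

theorem Coloring.exists_adj_dist_eq_or_add_two_eq (c : G.Coloring Bool) (hvw : G.dist v w ≠ 0)
    (heven : Even (G.dist v w)) (hs : G.Adj v s) :
    ∃ t, G.Adj w t ∧ (G.dist s t + 2 = G.dist v w ∨ G.dist s t = G.dist v w) := by
  have hrvw : G.Reachable v w := Reachable.of_dist_ne_zero hvw
  have hrws : G.Reachable w s := hrvw.symm.trans hs.reachable
  have hvs : G.dist v s = 1 := dist_eq_one_iff_adj.mpr hs
  have hupper : G.dist w s ≤ G.dist v w + 1 := by
    rw [dist_comm (u := v), ← hvs]; exact hrvw.symm.dist_triangle_left s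
  have hlower : G.dist v w ≤ 1 + G.dist w s := by
    rw [← hvs, dist_comm (u := w)]; exact hs.reachable.dist_triangle_left w
  have hodd : Odd (G.dist w s) := by
    rw [c.even_dist_iff_congr hrvw, ← Bool.eq_iff_iff] at heven
    rw [← Nat.not_even_iff_odd, c.even_dist_iff_congr hrws, ← Bool.eq_iff_iff, ← heven]
    exact c.valid hs
  have hws : w ≠ s := by
    rintro rfl
    simp at hodd
  obtain ⟨t, hwt, ht⟩ := hrws.exists_adj_dist_add_one_eq hws
  refine ⟨t, hwt, ?_⟩
  obtain ⟨k, hk⟩ := heven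
  obtain ⟨m, hm⟩ := hodd
  rw [dist_comm]
  omega

end SimpleGraph

open SimpleGraph

def D5.color : DV5 → Bool
  | Sum.inl _ => false
  | Sum.inr (_, i) => decide (Even (i : ℕ))

theorem D5.color_ne_of_rel {x y : DV5} (h : D5Rel x y) : D5.color x ≠ D5.color y := by
  rcases x with u | ⟨e, i⟩ <;> rcases y with u' | ⟨e', j⟩ <;> simp only [D5Rel] at h
  · rcases h with ⟨-, rfl⟩ | ⟨-, rfl⟩ <;> simp [D5.color, Nat.even_iff]
  · simp [D5.color, h.2, Nat.even_add_one, -Nat.not_even_iff_odd]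

def D5.bicoloring : D5.Coloring Bool :=
  Coloring.mk D5.color fun hxy => by
    rcases (fromRel_adj _ _ _).mp hxy with ⟨-, h | h⟩
    · exact D5.color_ne_of_rel h
    · exact (D5.color_ne_of_rel h).symm

/-- Let `v` and `w` be branch vertices of `D_5` with
`dist_{D_5}(v, w) = 6`. Then for every neighbor `s` of `v` in `D_5` there exists a
neighbor `t` of `w` in `D_5` with `dist_{D_5}(s, t) = 4` or `dist_{D_5}(s, t) = 6`. -/
theorem neighbor_of_far_branch_vertex_at_distance_four_or_six
    (v w : DV) (hvw : D5.dist (Sum.inl v) (Sum.inl w) = 6)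
    (s : DV5) (hs : D5.Adj (Sum.inl v) s) :
    ∃ t : DV5, D5.Adj (Sum.inl w) t ∧ (D5.dist s t = 4 ∨ D5.dist s t = 6) := by
  have hne : D5.dist (Sum.inl v) (Sum.inl w) ≠ 0 := by omega
  have heven : Even (D5.dist (Sum.inl v) (Sum.inl w)) := hvw ▸ by decide
  obtain ⟨t, hwt, hst⟩ := D5.bicoloring.exists_adj_dist_eq_or_add_two_eq hne heven hs
  exact ⟨t, hwt, by omega⟩
end
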